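/- arXiv:2511.04240 — 4 statements merged into one kernel-verified Lean document; each statement's English description precedes it below -/
import Mathlib

section
/- Let q be a prime, a ∈ F_q, and α₀,…,α_l ∈ F_q. Suppose (ξ₁,ξ₂) ∈ F_q² with (ξ₁,ξ₂) ≠ (0,0), and suppose that ∑_{j=0}^{l} α_j (ξ₁ a^{j+j₀} + ξ₂ (j+j₀) a^{j+j₀-1}) = 0 holds for both j₀ = 0 and j₀ = 1 (with conventions 0·0⁻¹ = 0 and 0⁰ = 1). Then a is a root of the polynomial α₀ + α₁ x + … + α_l x^l over F_q. -/
open Finset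

/-- If the linear recurrence relation
`∑_{j=0}^{l} α_j (ξ₁ a^{j+j₀} + ξ₂ (j+j₀) a^{j+j₀-1}) = 0` holds for `j₀ = 0` and `j₀ = 1`
with `(ξ₁, ξ₂) ≠ (0, 0)`, then `a` is a root of `α₀ + α₁ x + ⋯ + α_l x^l` over `𝔽_q`.
(The term `(j+j₀) * a^{j+j₀-1}` vanishes when `j + j₀ = 0`, matching the convention
`0 ⬝ 0⁻¹ = 0`, `0^0 = 1`; here `a^{j+j₀-1}` uses truncated subtraction.) -/
theorem stmt0 (q : ℕ) (hq : q.Prime) (l : ℕ) (a : ZMod q) (α : ℕ → ZMod q)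
    (ξ₁ ξ₂ : ZMod q) (hξ : ¬(ξ₁ = 0 ∧ ξ₂ = 0))
    (h : ∀ j₀ ∈ ({0, 1} : Finset ℕ),
      ∑ j ∈ range (l + 1),
        α j * (ξ₁ * a ^ (j + j₀) + ξ₂ * ((j + j₀ : ℕ) : ZMod q) * a ^ (j + j₀ - 1)) = 0) :
    ∑ j ∈ range (l + 1), α j * a ^ j = 0 := by
  haveI : Fact q.Prime := ⟨hq⟩
  have h0 := h 0 (by simp)
  have h1 := h 1 (by simp)
  have key : ξ₂ * ∑ j ∈ range (l + 1), α j * a ^ j = 0 := by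
    rw [mul_sum]
    have e : ∀ j ∈ range (l + 1), ξ₂ * (α j * a ^ j) =
        α j * (ξ₁ * a ^ (j + 1) + ξ₂ * ((j + 1 : ℕ) : ZMod q) * a ^ (j + 1 - 1))
        - a * (α j * (ξ₁ * a ^ (j + 0) + ξ₂ * ((j + 0 : ℕ) : ZMod q) * a ^ (j + 0 - 1))) := by
      intro j _
      cases j with
      | zero => simp; ring
      | succ n =>
        push_cast
        simp only [Nat.add_sub_cancel, Nat.add_zero, Nat.succ_sub_one]
        ring_nf
    rw [Finset.sum_congr rfl e, Finset.sum_sub_distrib, h1, ← Finset.mul_sum, h0]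
    ring
  by_cases hξ2 : ξ₂ = 0
  · have hξ1 : ξ₁ ≠ 0 := fun h' => hξ ⟨h', hξ2⟩
    have : ξ₁ * ∑ j ∈ range (l + 1), α j * a ^ j = 0 := by
      rw [mul_sum, ← h0]
      apply Finset.sum_congr rfl
      intro j _
      simp [hξ2]
      ring
    exact (mul_eq_zero.mp this).resolve_left hξ1
  · exact (mul_eq_zero.mp key).resolve_left hξ2
end

section
/- Let X = (x₀,…,x_N) be a finite sequence of integers, and let Λ(X) denote the set of integer polynomials P(x) = α₀ + α₁ x + … + α_d x^d of degree d ≤ N such that ∑_{j=0}^{d} α_j x_{j+j₀} = 0 for all j₀ = 0,…,N−d. If P₁, P₂ ∈ Λ(X) and deg(P₁) + deg(P₂) ≤ N, then gcd(P₁, P₂) ∈ Λ(X). -/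
/-!
Let `S` be the shift on sequences `ℕ → ℚ`. Extend `x₀, …, x_N` beyond `N` by the recurrence of
`P₁`, so that `P₁(S) y = 0`. Then `w = P₂(S) y` is also killed by `P₁(S)`, and its first
`deg P₁` terms only involve `x₀, …, x_N` (because `deg P₁ + deg P₂ ≤ N`), where they vanish
as `P₂ ∈ Λ(X)`; hence `w = 0`. So the annihilator of `y` in `ℚ[X]` contains `P₁` and `P₂`,
hence their gcd over `ℚ`, which by Gauss's lemma divides `G`. Read on the window `0, …, N`,
`G(S) y = 0` says `G ∈ Λ(X)`.
-/

open Finset Polynomial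

/-- `P ∈ Λ(x₀, …, x_N)`: `P` is an integer polynomial of degree `d ≤ N` whose coefficient
sequence gives a linear recurrence satisfied by `x₀, …, x_N`, i.e.
`∑_{j=0}^{d} (coeff P j) * x_{j+j₀} = 0` for all `j₀ = 0, …, N - d`. -/
def memLambda (N : ℕ) (x : ℕ → ℤ) (P : Polynomial ℤ) : Prop :=
  P.natDegree ≤ N ∧
    ∀ j₀ : ℕ, j₀ + P.natDegree ≤ N →
      ∑ j ∈ range (P.natDegree + 1), P.coeff j * x (j + j₀) = 0

open scoped nonZeroDivisors

section GaussLemma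

variable {R K : Type*} [CommRing R] [IsDomain R] [NormalizedGCDMonoid R] [Field K] [Algebra R K]
  [IsFractionRing R K]

theorem Polynomial.exists_isPrimitive_associated_map {g : K[X]} (hg : g ≠ 0) :
    ∃ h : R[X], h.IsPrimitive ∧ Associated (h.map (algebraMap R K)) g := by
  obtain ⟨b, hb, hbg⟩ := IsLocalization.integerNormalization_spec R⁰ g
  set g' := IsLocalization.integerNormalization R⁰ g
  have hg' : g' ≠ 0 := IsFractionRing.integerNormalization_eq_zero_iff.not.mpr hg
  have hc : IsUnit (C (algebraMap R K g'.content)) := by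
    simpa [IsFractionRing.injective R K |>.eq_iff, content_eq_zero_iff] using hg'
  have hb : IsUnit (C (algebraMap R K b)) := by
    simpa [IsFractionRing.injective R K |>.eq_iff] using nonZeroDivisors.ne_zero hb
  have hscale : C (algebraMap R K g'.content) * g'.primPart.map (algebraMap R K) =
      C (algebraMap R K b) * g := by
    rw [← map_C, ← Polynomial.map_mul, ← g'.eq_C_content_mul_primPart, hbg, Algebra.smul_def,
      algebraMap_apply]
  refine ⟨g'.primPart, g'.isPrimitive_primPart, ?_⟩
  exact (associated_unit_mul_left _ _ hc).symm.trans
    (hscale ▸ associated_unit_mul_left _ _ hb)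

theorem Polynomial.map_mem_span_pair_of_forall_dvd {P₁ P₂ G : R[X]} (hP₁ : P₁ ≠ 0)
    (hG : ∀ D : R[X], D ∣ P₁ → D ∣ P₂ → D ∣ G) :
    G.map (algebraMap R K) ∈
      Ideal.span {P₁.map (algebraMap R K), P₂.map (algebraMap R K)} := by
  classical
  set g := EuclideanDomain.gcd (P₁.map (algebraMap R K)) (P₂.map (algebraMap R K))
  have hg : g ≠ 0 := fun h =>
    hP₁ <| (Polynomial.map_eq_zero_iff (IsFractionRing.injective R K)).mp
      (EuclideanDomain.gcd_eq_zero_iff.mp h).1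
  obtain ⟨h, hprim, hassoc⟩ := exists_isPrimitive_associated_map (R := R) hg
  have hdvd {P : R[X]} (hP : g ∣ P.map (algebraMap R K)) : h ∣ P :=
    hprim.dvd_of_fraction_map_dvd_fraction_map (hassoc.dvd.trans hP)
  have hhG : h ∣ G :=
    hG h (hdvd (EuclideanDomain.gcd_dvd_left _ _)) (hdvd (EuclideanDomain.gcd_dvd_right _ _))
  rw [← EuclideanDomain.span_gcd, Ideal.mem_span_singleton]
  exact hassoc.symm.dvd.trans (Polynomial.map_dvd _ hhG)

end GaussLemma

section Shift

variable {R : Type*} [CommSemiring R]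

variable (R) in
def seqShift : Module.End R (ℕ → R) := LinearMap.funLeft R R Nat.succ

theorem seqShift_pow_apply (k : ℕ) (y : ℕ → R) (m : ℕ) :
    (seqShift R ^ k) y m = y (m + k) := by
  induction k generalizing y with
  | zero => rfl
  | succ k ih => rw [pow_succ, Module.End.mul_apply, ih]; rfl

theorem aeval_seqShift_apply (Q : R[X]) (y : ℕ → R) (m : ℕ) :
    aeval (seqShift R) Q y m = ∑ j ∈ range (Q.natDegree + 1), Q.coeff j * y (j + m) := by
  simp only [aeval_eq_sum_range, LinearMap.coe_sum, Finset.sum_apply, LinearMap.smul_apply,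
    Pi.smul_apply, seqShift_pow_apply, smul_eq_mul, add_comm m]

theorem aeval_seqShift_apply_congr (Q : R[X]) {y z : ℕ → R} {m : ℕ}
    (h : ∀ j ≤ Q.natDegree, y (j + m) = z (j + m)) :
    aeval (seqShift R) Q y m = aeval (seqShift R) Q z m := by
  simp only [aeval_seqShift_apply]
  exact sum_congr rfl fun j hj => by rw [h j (Nat.lt_succ_iff.mp (mem_range.mp hj))]

theorem aeval_seqShift_comm (P Q : R[X]) (y : ℕ → R) :
    aeval (seqShift R) P (aeval (seqShift R) Q y) =
      aeval (seqShift R) Q (aeval (seqShift R) P y) := by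
  simp only [← Module.End.mul_apply, ← map_mul, mul_comm]

end Shift

section Recurrence

variable {K : Type*} [Field K]

theorem eq_zero_of_aeval_seqShift_eq_zero {Q : K[X]} (hQ : Q ≠ 0) {w : ℕ → K}
    (hw : aeval (seqShift K) Q w = 0) (hinit : ∀ m < Q.natDegree, w m = 0) : w = 0 := by
  refine funext fun n => Nat.strong_induction_on (p := fun n => w n = 0) n fun n ih => ?_
  by_cases hn : n < Q.natDegree
  · exact hinit n hn
  have hrec := congrFun hw (n - Q.natDegree)
  rw [aeval_seqShift_apply, sum_range_succ, sum_eq_zero fun j hj => by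
    rw [ih _ (by have := mem_range.mp hj; omega), mul_zero], zero_add,
    Nat.add_sub_cancel' (not_lt.mp hn)] at hrec
  exact (mul_eq_zero.mp hrec).resolve_left (leadingCoeff_ne_zero.mpr hQ)

/-- The second disjunct only matters when `N < Q.natDegree`; it keeps the recursive calls at
indices below `n`. -/
noncomputable def extendByRecurrence (Q : K[X]) (N : ℕ) (z : ℕ → K) (n : ℕ) : K :=
  if n ≤ N ∨ n < Q.natDegree then z n
  else -Q.leadingCoeff⁻¹ * ∑ j ∈ (range Q.natDegree).attach,
    Q.coeff j * extendByRecurrence Q N z (j + (n - Q.natDegree))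
termination_by n
decreasing_by have := mem_range.mp j.2; omega

theorem extendByRecurrence_of_le (Q : K[X]) {N : ℕ} (z : ℕ → K) {n : ℕ} (hn : n ≤ N) :
    extendByRecurrence Q N z n = z n := by
  rw [extendByRecurrence, if_pos (Or.inl hn)]

theorem aeval_seqShift_extendByRecurrence_apply {Q : K[X]} (hQ : Q ≠ 0) {N : ℕ} (z : ℕ → K)
    {m : ℕ} (hm : N < m + Q.natDegree) :
    aeval (seqShift K) Q (extendByRecurrence Q N z) m = 0 := by
  have hlast : extendByRecurrence Q N z (Q.natDegree + m) = -Q.leadingCoeff⁻¹ *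
      ∑ j ∈ range Q.natDegree, Q.coeff j * extendByRecurrence Q N z (j + m) := by
    rw [extendByRecurrence, if_neg (by omega), Nat.add_sub_cancel_left,
      sum_attach (range Q.natDegree) fun j => Q.coeff j * extendByRecurrence Q N z (j + m)]
  rw [aeval_seqShift_apply, sum_range_succ, hlast, ← leadingCoeff, neg_mul, mul_neg, ← mul_assoc,
    mul_inv_cancel₀ (leadingCoeff_ne_zero.mpr hQ), one_mul, add_neg_cancel]

theorem exists_eqOn_aeval_seqShift_eq_zero {Q : K[X]} (hQ : Q ≠ 0) (N : ℕ) (z : ℕ → K)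
    (hz : ∀ m, m + Q.natDegree ≤ N → aeval (seqShift K) Q z m = 0) :
    ∃ y : ℕ → K, (∀ n ≤ N, y n = z n) ∧ aeval (seqShift K) Q y = 0 := by
  refine ⟨extendByRecurrence Q N z, fun n hn => extendByRecurrence_of_le Q z hn,
    funext fun m => ?_⟩
  by_cases hm : m + Q.natDegree ≤ N
  · rw [aeval_seqShift_apply_congr Q fun j hj => extendByRecurrence_of_le Q z (by omega), hz m hm]
    rfl
  · exact aeval_seqShift_extendByRecurrence_apply hQ z (by omega)

end Recurrence

theorem aeval_seqShift_map_intCast_apply (P : ℤ[X]) (x : ℕ → ℤ) (m : ℕ) :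
    aeval (seqShift ℚ) (P.map (algebraMap ℤ ℚ)) (fun n => (x n : ℚ)) m =
      ((∑ j ∈ range (P.natDegree + 1), P.coeff j * x (j + m) : ℤ) : ℚ) := by
  rw [aeval_seqShift_apply, natDegree_map_eq_of_injective (algebraMap ℤ ℚ).injective_int]
  push_cast
  simp only [coeff_map, algebraMap_int_eq, eq_intCast]

theorem memLambda_iff_of_eqOn {N : ℕ} {x : ℕ → ℤ} {y : ℕ → ℚ} (hy : ∀ n ≤ N, y n = x n)
    (P : ℤ[X]) :
    memLambda N x P ↔ P.natDegree ≤ N ∧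
      ∀ m, m + P.natDegree ≤ N → aeval (seqShift ℚ) (P.map (algebraMap ℤ ℚ)) y m = 0 := by
  refine and_congr_right fun _ => forall₂_congr fun m hm => ?_
  rw [aeval_seqShift_apply_congr _ (z := fun n => (x n : ℚ)) fun j hj => hy _ ?_,
    aeval_seqShift_map_intCast_apply, Int.cast_eq_zero]
  rw [natDegree_map_eq_of_injective (algebraMap ℤ ℚ).injective_int] at hj
  omega

theorem stmt2_general (N : ℕ) (x : ℕ → ℤ) (P₁ P₂ : Polynomial ℤ) (hP₁ : P₁ ≠ 0)
    (h₁ : memLambda N x P₁) (h₂ : memLambda N x P₂)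
    (hdeg : P₁.natDegree + P₂.natDegree ≤ N)
    (G : Polynomial ℤ) (hG₁ : G ∣ P₁)
    (hGgcd : ∀ D : Polynomial ℤ, D ∣ P₁ → D ∣ P₂ → D ∣ G) :
    memLambda N x G := by
  have hdegMap (P : ℤ[X]) : (P.map (algebraMap ℤ ℚ)).natDegree = P.natDegree :=
    natDegree_map_eq_of_injective (algebraMap ℤ ℚ).injective_int P
  have hQ₁ : P₁.map (algebraMap ℤ ℚ) ≠ 0 :=
    (Polynomial.map_ne_zero_iff (algebraMap ℤ ℚ).injective_int).mpr hP₁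
  obtain ⟨y, hyx, hP₁y⟩ := exists_eqOn_aeval_seqShift_eq_zero hQ₁ N (fun n => (x n : ℚ))
    fun m hm => by
      rw [aeval_seqShift_map_intCast_apply, h₁.2 m (by rwa [hdegMap] at hm), Int.cast_zero]
  have hP₂y : aeval (seqShift ℚ) (P₂.map (algebraMap ℤ ℚ)) y = 0 := by
    refine eq_zero_of_aeval_seqShift_eq_zero hQ₁ ?_ fun m hm => ?_
    · rw [aeval_seqShift_comm, hP₁y, map_zero]
    · exact ((memLambda_iff_of_eqOn hyx P₂).mp h₂).2 m (by rw [hdegMap] at hm; omega)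
  have hGy : aeval (seqShift ℚ) (G.map (algebraMap ℤ ℚ)) y = 0 := by
    obtain ⟨A, B, hAB⟩ :=
      Ideal.mem_span_pair.mp (map_mem_span_pair_of_forall_dvd (K := ℚ) hP₁ hGgcd)
    rw [← hAB, map_add, map_mul, map_mul, LinearMap.add_apply, Module.End.mul_apply,
      Module.End.mul_apply, hP₁y, hP₂y, map_zero, map_zero, add_zero]
  exact (memLambda_iff_of_eqOn hyx G).mpr
    ⟨(natDegree_le_of_dvd hG₁ hP₁).trans h₁.1, fun m _ => by rw [hGy]; rfl⟩

/-- Konyagin. If `P₁, P₂ ∈ Λ(X)` for a finite integer sequence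
`X = (x₀, …, x_N)` and `deg P₁ + deg P₂ ≤ N`, then `gcd(P₁, P₂) ∈ Λ(X)`
(for any `G ∈ ℤ[x]` which is a greatest common divisor of `P₁` and `P₂`). -/
theorem stmt2 (N : ℕ) (x : ℕ → ℤ) (P₁ P₂ : Polynomial ℤ) (hP₁ : P₁ ≠ 0) (hP₂ : P₂ ≠ 0)
    (h₁ : memLambda N x P₁) (h₂ : memLambda N x P₂)
    (hdeg : P₁.natDegree + P₂.natDegree ≤ N)
    (G : Polynomial ℤ) (hG₁ : G ∣ P₁) (hG₂ : G ∣ P₂)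
    (hGgcd : ∀ D : Polynomial ℤ, D ∣ P₁ → D ∣ P₂ → D ∣ G) :
    memLambda N x G :=
  stmt2_general N x P₁ P₂ hP₁ h₁ h₂ hdeg G hG₁ hGgcd
end

section
/- Let q be a prime and l, a positive integer. There exist integers α₀, …, α_l, not all zero, with |α_j| < q^{2/(l+1)} for all j, such that a given element a ∈ F_q is a double root of the polynomial α₀ + α₁ x + … + α_l x^l over F_q (i.e., both the polynomial and its formal derivative vanish at a), provided l ≥ 3 and q is sufficiently large in terms of l. -/
open Finset

lemma aux_rpow_pow (l q : ℕ) :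
    ((q : ℝ) ^ ((2 : ℝ) / (l + 1))) ^ (l + 1) = (q : ℝ) ^ 2 := by
  have hl1 : ((l : ℝ) + 1) ≠ 0 := by positivity
  rw [← Real.rpow_natCast ((q : ℝ) ^ ((2 : ℝ) / (l + 1))) (l + 1),
    ← Real.rpow_mul (by positivity)]
  push_cast
  rw [div_mul_cancel₀ _ hl1]
  rw [show (2 : ℝ) = ((2 : ℕ) : ℝ) by norm_num, Real.rpow_natCast]

lemma aux_not_int (l q : ℕ) (hl : 3 ≤ l) (hq : q.Prime) (m : ℕ) :
    (m : ℝ) ≠ (q : ℝ) ^ ((2 : ℝ) / (l + 1)) := by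
  intro h
  have hm : (m : ℝ) ^ (l + 1) = (q : ℝ) ^ 2 := by rw [h, aux_rpow_pow]
  have hmn : m ^ (l + 1) = q ^ 2 := by exact_mod_cast hm
  have hqm : q ∣ m := by
    refine hq.dvd_of_dvd_pow (n := l + 1) ?_
    rw [hmn]
    exact dvd_pow_self q (by norm_num)
  have hdvd : q ^ (l + 1) ∣ q ^ 2 := by
    rw [← hmn]
    exact pow_dvd_pow_of_dvd hqm _
  have := (Nat.pow_dvd_pow_iff_le_right hq.one_lt).mp hdvd
  omega

/-- finite-field Siegel's lemma, by pigeonhole. Fix `l ≥ 3`. For every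
sufficiently large prime `q` (in terms of `l`) and every `a ∈ 𝔽_q`, there exist integers
`α₀, …, α_l`, not all zero, with `|α_j| < q^{2/(l+1)}`, such that `a` is a double root of
`α₀ + α₁ x + ⋯ + α_l x^l` over `𝔽_q`: both the polynomial and its formal derivative
vanish at `a`. -/
theorem stmt13 (l : ℕ) (hl : 3 ≤ l) :
    ∃ q₀ : ℕ, ∀ q : ℕ, ∀ _ : Fact q.Prime, q₀ ≤ q → ∀ a : ZMod q,
      ∃ α : ℕ → ℤ,
        (∃ j ≤ l, α j ≠ 0) ∧
        (∀ j ≤ l, (|α j| : ℝ) < (q : ℝ) ^ ((2 : ℝ) / (l + 1))) ∧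
        ∑ j ∈ range (l + 1), (α j : ZMod q) * a ^ j = 0 ∧
        ∑ j ∈ range (l + 1), (α j : ZMod q) * (j : ZMod q) * a ^ (j - 1) = 0 := by
  refine ⟨0, fun q hp _ a => ?_⟩
  haveI : NeZero q := ⟨hp.out.ne_zero⟩
  set x : ℝ := (q : ℝ) ^ ((2 : ℝ) / (l + 1)) with hxdef
  have hx0 : 0 ≤ x := Real.rpow_nonneg (Nat.cast_nonneg q) _
  set m : ℕ := ⌊x⌋.toNat with hmdef
  have h1 : (m : ℝ) = ((⌊x⌋ : ℤ) : ℝ) := by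
    rw [hmdef]; exact_mod_cast Int.toNat_of_nonneg (Int.floor_nonneg.mpr hx0)
  have hmx : (m : ℝ) < x :=
    lt_of_le_of_ne (h1 ▸ Int.floor_le x) (aux_not_int l q hl hp.out m)
  have hxB : x < (m : ℝ) + 1 := by
    rw [h1]; exact Int.lt_floor_add_one x
  have hcard : q ^ 2 < (m + 1) ^ (l + 1) := by
    have h2 : ((q : ℝ)) ^ 2 < ((m : ℝ) + 1) ^ (l + 1) := by
      rw [← aux_rpow_pow l q, ← hxdef]
      exact pow_lt_pow_left₀ hxB hx0 (by omega)
    exact_mod_cast h2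
  have hcard2 : Fintype.card (ZMod q × ZMod q) <
      Fintype.card (Fin (l + 1) → Fin (m + 1)) := by
    rw [Fintype.card_prod, ZMod.card, Fintype.card_fun, Fintype.card_fin,
      Fintype.card_fin, ← sq]
    exact hcard
  obtain ⟨v, w, hvw, hf⟩ := Fintype.exists_ne_map_eq_of_card_lt
    (fun v : Fin (l + 1) → Fin (m + 1) =>
      ((∑ j : Fin (l + 1), ((v j : ℕ) : ZMod q) * a ^ (j : ℕ),
        ∑ j : Fin (l + 1), ((v j : ℕ) : ZMod q) * ((j : ℕ) : ZMod q) * a ^ ((j : ℕ) - 1)) :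
        ZMod q × ZMod q)) hcard2
  have hf1 := congrArg Prod.fst hf
  have hf2 := congrArg Prod.snd hf
  simp only at hf1 hf2
  refine ⟨fun j => if h : j < l + 1 then ((v ⟨j, h⟩ : ℕ) : ℤ) - ((w ⟨j, h⟩ : ℕ) : ℤ) else 0,
    ?_, ?_, ?_, ?_⟩
  · obtain ⟨j, hj⟩ := Function.ne_iff.mp hvw
    refine ⟨j, Nat.lt_succ_iff.mp j.isLt, ?_⟩
    show (if h : (j : ℕ) < l + 1 then ((v ⟨j, h⟩ : ℕ) : ℤ) - ((w ⟨j, h⟩ : ℕ) : ℤ) else 0) ≠ 0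
    rw [dif_pos j.isLt]
    simp only [Fin.eta]
    refine sub_ne_zero.mpr ?_
    intro h
    exact hj (Fin.ext (by exact_mod_cast h))
  · intro j hj
    have hjl : j < l + 1 := by omega
    show |(((if h : j < l + 1 then ((v ⟨j, h⟩ : ℕ) : ℤ) - ((w ⟨j, h⟩ : ℕ) : ℤ) else 0) : ℤ) : ℝ)| < x
    rw [dif_pos hjl]
    have h1 : (v ⟨j, hjl⟩ : ℕ) ≤ m := Nat.lt_succ_iff.mp (v _).isLt
    have h2 : (w ⟨j, hjl⟩ : ℕ) ≤ m := Nat.lt_succ_iff.mp (w _).isLt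
    have habs : |((v ⟨j, hjl⟩ : ℕ) : ℤ) - ((w ⟨j, hjl⟩ : ℕ) : ℤ)| ≤ (m : ℤ) := by
      rw [abs_sub_le_iff]; omega
    refine lt_of_le_of_lt ?_ hmx
    rw [← Int.cast_abs]
    exact_mod_cast habs
  · rw [Finset.sum_range]
    calc ∑ j : Fin (l + 1),
          ((if h : (j : ℕ) < l + 1 then ((v ⟨j, h⟩ : ℕ) : ℤ) - ((w ⟨j, h⟩ : ℕ) : ℤ)
            else 0 : ℤ) : ZMod q) * a ^ (j : ℕ)
        = ∑ j : Fin (l + 1),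
            (((v j : ℕ) : ZMod q) * a ^ (j : ℕ) - ((w j : ℕ) : ZMod q) * a ^ (j : ℕ)) := by
          refine Finset.sum_congr rfl fun j _ => ?_
          rw [dif_pos j.isLt]
          simp only [Fin.eta]
          push_cast
          ring
      _ = 0 := by rw [Finset.sum_sub_distrib, hf1, sub_self]
  · rw [Finset.sum_range]
    calc ∑ j : Fin (l + 1),
          ((if h : (j : ℕ) < l + 1 then ((v ⟨j, h⟩ : ℕ) : ℤ) - ((w ⟨j, h⟩ : ℕ) : ℤ)
            else 0 : ℤ) : ZMod q) * ((j : ℕ) : ZMod q) * a ^ ((j : ℕ) - 1)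
        = ∑ j : Fin (l + 1),
            (((v j : ℕ) : ZMod q) * ((j : ℕ) : ZMod q) * a ^ ((j : ℕ) - 1)
              - ((w j : ℕ) : ZMod q) * ((j : ℕ) : ZMod q) * a ^ ((j : ℕ) - 1)) := by
          refine Finset.sum_congr rfl fun j _ => ?_
          rw [dif_pos j.isLt]
          simp only [Fin.eta]
          push_cast
          ring
      _ = 0 := by rw [Finset.sum_sub_distrib, hf2, sub_self]
end

section
/- Let q be an odd prime and a ∈ F_q^×. Let (X̃_i)_{i∈I} be independent random variables taking value 0 with probability 3/4 and each of ±1 with probability 1/8, with |I| ≤ q, and let (X_i)_{i∈I} be independent uniform ±1 random variables. Then for every x ∈ F_q, max_y P[∑_{i∈I} X_i a^i = y] ≤ P[∑_{i∈I} X̃_i a^i = 0]. -/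
open Finset

/-- The value of the lazy symmetric step: a uniform element of `Fin 8` is mapped to `1`
or `-1` each with probability `1/8` and to `0` with probability `3/4`. -/
def lazyStep (k : Fin 8) : ℤ := if (k : ℕ) = 6 then 1 else if (k : ℕ) = 7 then -1 else 0

/-!
Fourier inversion on `ZMod q`: with `e` the standard additive character, the `±1` walk with
coefficients `cᵢ` has characteristic function `∏ i, Re e(ξ cᵢ)` and the lazy walk
`∏ i, (3 + Re e(ξ cᵢ)) / 4`, so `q · P[∑ Xᵢ cᵢ = y] ≤ ∑ ξ |∏ i, Re e(ξ cᵢ)|` while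
`q · P[∑ X̃ᵢ cᵢ = 0] = ∑ ξ ∏ i, (3 + Re e(ξ cᵢ)) / 4`. Since `cos 2θ = 2 cos² θ - 1`, the inequality
`(|cos θ| - 1)² ≥ 0` reads `|cos θ| ≤ (3 + cos 2θ) / 4`; this bounds each term of the first sum at
`ξ` by the term of the second at `2ξ`, and `ξ ↦ 2ξ` permutes `ZMod q` because `q` is odd.
-/

lemma AddChar.map_sum_eq_prod {A M ι : Type*} [AddCommMonoid A] [CommMonoid M]
    (ψ : AddChar A M) (s : Finset ι) (f : ι → A) : ψ (∑ i ∈ s, f i) = ∏ i ∈ s, ψ (f i) := by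
  classical
  induction s using Finset.induction_on with
  | empty => simp
  | insert j s hj ih => rw [sum_insert hj, prod_insert hj, AddChar.map_add_eq_mul, ih]

namespace ZMod

variable {q : ℕ} [NeZero q]

lemma sum_stdAddChar_mul (z : ZMod q) :
    ∑ ξ : ZMod q, stdAddChar (ξ * z) = if z = 0 then (q : ℂ) else 0 := by
  rw [AddChar.sum_mulShift z (isPrimitive_stdAddChar q), card, Nat.cast_ite, Nat.cast_zero]

lemma card_filter_sum_mul_eq_sum_prod {ι K : Type*} [Fintype ι] [DecidableEq ι] [Fintype K]
    (step : ι → K → ZMod q) (y : ZMod q) :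
    (#{f : ι → K | ∑ i, step i (f i) = y} : ℂ) * q
      = ∑ ξ : ZMod q, stdAddChar (-(ξ * y)) * ∏ i, ∑ k, stdAddChar (ξ * step i k) := by
  calc (#{f : ι → K | ∑ i, step i (f i) = y} : ℂ) * q
      = ∑ f : ι → K, ∑ ξ : ZMod q, stdAddChar (ξ * (∑ i, step i (f i) - y)) := by
        simp only [sum_stdAddChar_mul, sub_eq_zero]
        rw [← sum_filter, sum_const, nsmul_eq_mul]
    _ = _ := by
        rw [sum_comm]
        refine sum_congr rfl fun ξ _ => ?_
        rw [prod_univ_sum, Fintype.piFinset_univ, mul_sum]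
        refine sum_congr rfl fun f _ => ?_
        rw [mul_sub, sub_eq_neg_add, AddChar.map_add_eq_mul, mul_sum, AddChar.map_sum_eq_prod]

lemma stdAddChar_add_stdAddChar_neg (x : ZMod q) :
    stdAddChar x + stdAddChar (-x) = 2 * (stdAddChar x).re := by
  rw [AddChar.map_neg_eq_conj, Complex.add_conj, Complex.ofReal_mul, Complex.ofReal_ofNat]

lemma sum_bool_stdAddChar_sign_mul (ξ c : ZMod q) :
    ∑ b : Bool, stdAddChar (ξ * ((if b then 1 else -1) * c)) = 2 * (stdAddChar (ξ * c)).re := by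
  simp only [Fintype.sum_bool, if_true, Bool.false_eq_true, if_false, one_mul, neg_one_mul,
    mul_neg, stdAddChar_add_stdAddChar_neg]

lemma sum_fin_eight_stdAddChar_lazyStep_mul (ξ c : ZMod q) :
    ∑ k : Fin 8, stdAddChar (ξ * ((lazyStep k : ZMod q) * c))
      = 8 * ((3 + (stdAddChar (ξ * c)).re) / 4) := by
  have h := stdAddChar_add_stdAddChar_neg (ξ * c)
  norm_num [Fin.sum_univ_eight, lazyStep]
  linear_combination h

lemma abs_re_stdAddChar_le (x : ZMod q) :
    |(stdAddChar x).re| ≤ (3 + (stdAddChar (2 * x)).re) / 4 := by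
  have hnorm :
      (stdAddChar x).re * (stdAddChar x).re + (stdAddChar x).im * (stdAddChar x).im = 1 := by
    rw [← Complex.normSq_apply, Complex.normSq_eq_norm_sq, AddChar.norm_apply, one_pow]
  have hdouble : (stdAddChar (2 * x)).re = 2 * (stdAddChar x).re ^ 2 - 1 := by
    rw [two_mul, AddChar.map_add_eq_mul, Complex.mul_re]
    linear_combination -hnorm
  rw [hdouble]
  nlinarith [sq_abs (stdAddChar x).re, sq_nonneg (|(stdAddChar x).re| - 1)]

variable {ι : Type*} [Fintype ι]

lemma card_sign_walk_mul_le [DecidableEq ι] (c : ι → ZMod q) (y : ZMod q) :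
    (#{ε : ι → Bool | ∑ i, (if ε i then 1 else -1) * c i = y} : ℝ) * q
      ≤ 2 ^ Fintype.card ι * ∑ ξ : ZMod q, |∏ i, (stdAddChar (ξ * c i)).re| := by
  have hcount := card_filter_sum_mul_eq_sum_prod (fun i (b : Bool) => (if b then 1 else -1) * c i) y
  simp only [sum_bool_stdAddChar_sign_mul] at hcount
  calc (#{ε : ι → Bool | ∑ i, (if ε i then 1 else -1) * c i = y} : ℝ) * q
      = ‖(#{ε : ι → Bool | ∑ i, (if ε i then 1 else -1) * c i = y} : ℂ) * q‖ := by
        rw [norm_mul, Complex.norm_natCast, Complex.norm_natCast]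
    _ ≤ _ := hcount ▸ norm_sum_le _ _
    _ = _ := by
        simp only [mul_sum, norm_mul, AddChar.norm_apply, one_mul, norm_prod, norm_pow,
          Complex.norm_ofNat, Complex.norm_real, Real.norm_eq_abs, prod_mul_distrib, prod_const,
          card_univ, abs_prod]

lemma card_lazy_walk_mul_eq [DecidableEq ι] (c : ι → ZMod q) :
    (#{η : ι → Fin 8 | ∑ i, (lazyStep (η i) : ZMod q) * c i = 0} : ℝ) * q
      = 8 ^ Fintype.card ι * ∑ ξ : ZMod q, ∏ i, (3 + (stdAddChar (ξ * c i)).re) / 4 := by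
  have hcount := card_filter_sum_mul_eq_sum_prod (fun i (k : Fin 8) => (lazyStep k : ZMod q) * c i) 0
  simp only [sum_fin_eight_stdAddChar_lazyStep_mul, mul_zero, neg_zero, AddChar.map_zero_eq_one,
    one_mul, prod_mul_distrib, prod_const, card_univ, ← mul_sum] at hcount
  exact_mod_cast hcount

lemma sum_abs_prod_re_stdAddChar_le (h2 : IsUnit (2 : ZMod q)) (c : ι → ZMod q) :
    ∑ ξ : ZMod q, |∏ i, (stdAddChar (ξ * c i)).re|
      ≤ ∑ ξ : ZMod q, ∏ i, (3 + (stdAddChar (ξ * c i)).re) / 4 :=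
  calc ∑ ξ : ZMod q, |∏ i, (stdAddChar (ξ * c i)).re|
      ≤ ∑ ξ : ZMod q, ∏ i, (3 + (stdAddChar (2 * ξ * c i)).re) / 4 := by
        gcongr with ξ
        rw [abs_prod]
        gcongr with i
        rw [mul_assoc]
        exact abs_re_stdAddChar_le _
    _ = _ := Fintype.sum_bijective _ (IsUnit.isUnit_iff_mulLeft_bijective.mp h2) _ _ fun _ => rfl

theorem card_sign_walk_div_le_card_lazy_walk_div [DecidableEq ι] (h2 : IsUnit (2 : ZMod q))
    (c : ι → ZMod q) (y : ZMod q) :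
    (#{ε : ι → Bool | ∑ i, (if ε i then 1 else -1) * c i = y} : ℝ) / 2 ^ Fintype.card ι
      ≤ (#{η : ι → Fin 8 | ∑ i, (lazyStep (η i) : ZMod q) * c i = 0} : ℝ) / 8 ^ Fintype.card ι := by
  have hq : (0 : ℝ) < q := by exact_mod_cast Nat.pos_of_neZero q
  rw [div_le_div_iff₀ (by positivity) (by positivity), ← mul_le_mul_iff_of_pos_right hq]
  calc _ = (#{ε : ι → Bool | ∑ i, (if ε i then 1 else -1) * c i = y} : ℝ) * q
        * 8 ^ Fintype.card ι := by ring
    _ ≤ 2 ^ Fintype.card ι * (∑ ξ : ZMod q, ∏ i, (3 + (stdAddChar (ξ * c i)).re) / 4)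
        * 8 ^ Fintype.card ι := by
      grw [card_sign_walk_mul_le, sum_abs_prod_re_stdAddChar_le h2]
    _ = _ := by rw [mul_right_comm _ _ (q : ℝ), card_lazy_walk_mul_eq]; ring

end ZMod

theorem stmt17_general (q : ℕ) [hq : Fact q.Prime] (hq2 : q ≠ 2) (a : ZMod q)
    (I : Finset ℕ) (y : ZMod q) :
    ((Finset.univ.filter (fun ε : {i // i ∈ I} → Bool =>
        ∑ i ∈ I.attach, (if ε i then (1 : ZMod q) else -1) * a ^ (i : ℕ) = y)).card : ℝ)
        / 2 ^ I.card
      ≤ ((Finset.univ.filter (fun η : {i // i ∈ I} → Fin 8 =>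
        ∑ i ∈ I.attach, ((lazyStep (η i) : ℤ) : ZMod q) * a ^ (i : ℕ) = 0)).card : ℝ)
        / 8 ^ I.card := by
  have h2 : IsUnit (2 : ZMod q) :=
    (Ring.two_ne_zero (by rwa [ZMod.ringChar_zmod_n])).isUnit
  have := ZMod.card_sign_walk_div_le_card_lazy_walk_div h2 (fun i : I => a ^ (i : ℕ)) y
  rwa [Fintype.card_coe, univ_eq_attach] at this

/-- replacement/symmetrization step. Let `q` be an odd prime,
`a ∈ 𝔽_q^×`, and `I` a finite index set with `|I| ≤ q`. Let `(X_i)_{i ∈ I}` be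
independent uniform `±1` random variables (modelled by a uniform sign pattern
`ε : I → Bool`) and `(X̃_i)_{i ∈ I}` independent random variables taking the value `0`
with probability `3/4` and each of `±1` with probability `1/8` (modelled by a uniform
`η : I → Fin 8` composed with `lazyStep`). Then for every `y ∈ 𝔽_q`,
`P[∑_{i∈I} X_i a^i = y] ≤ P[∑_{i∈I} X̃_i a^i = 0]`. -/
theorem stmt17 (q : ℕ) [hq : Fact q.Prime] (hq2 : q ≠ 2) (a : ZMod q) (ha : a ≠ 0)
    (I : Finset ℕ) (hcard : I.card ≤ q) (y : ZMod q) :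
    ((Finset.univ.filter (fun ε : {i // i ∈ I} → Bool =>
        ∑ i ∈ I.attach, (if ε i then (1 : ZMod q) else -1) * a ^ (i : ℕ) = y)).card : ℝ)
        / 2 ^ I.card
      ≤ ((Finset.univ.filter (fun η : {i // i ∈ I} → Fin 8 =>
        ∑ i ∈ I.attach, ((lazyStep (η i) : ℤ) : ZMod q) * a ^ (i : ℕ) = 0)).card : ℝ)
        / 8 ^ I.card :=
  stmt17_general q (hq := hq) hq2 a I y
end
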